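/- Coercivity for the p=2 system: if 1 < q < 2 < α+β and there is a constant C ≥ 0 with λ(∫_Ω a|u|^q + ∫_Ω a|v|^q) ≤ C‖(u,v)‖_H^q for all (u,v), then on the Nehari manifold J_λ(u,v) ≥ ((α+β-2)/(2(α+β)))‖(u,v)‖²_H - ((α+β-q)/(q(α+β)))C‖(u,v)‖_H^q; in particular J_λ is coercive and bounded below on M_λ(Ω). -/

import Mathlib

open MeasureTheory Real

/-- `‖(u,v)‖²_H = ∫_Ω |∇u|² + ∫_Ω |∇v|²` on `H = H₀¹(Ω) × H₀¹(Ω)`. -/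
noncomputable def normH2 {N : ℕ} (Ω : Set (EuclideanSpace ℝ (Fin N)))
    (u v : EuclideanSpace ℝ (Fin N) → ℝ) : ℝ :=
  (∫ x in Ω, ‖gradient u x‖ ^ (2 : ℝ)) + ∫ x in Ω, ‖gradient v x‖ ^ (2 : ℝ)

/-- `∫_Ω a|u|^q + ∫_Ω a|v|^q`. -/
noncomputable def aTerm {N : ℕ} (Ω : Set (EuclideanSpace ℝ (Fin N))) (q : ℝ)
    (a u v : EuclideanSpace ℝ (Fin N) → ℝ) : ℝ :=
  (∫ x in Ω, a x * |u x| ^ q) + ∫ x in Ω, a x * |v x| ^ q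

/-- `∫_Ω b|u|^α|v|^β`. -/
noncomputable def bTerm {N : ℕ} (Ω : Set (EuclideanSpace ℝ (Fin N))) (α β : ℝ)
    (b u v : EuclideanSpace ℝ (Fin N) → ℝ) : ℝ :=
  ∫ x in Ω, b x * |u x| ^ α * |v x| ^ β

/-- The energy functional `J_λ` for the `p = 2` system `(E_λ)`. -/
noncomputable def J2 {N : ℕ} (Ω : Set (EuclideanSpace ℝ (Fin N))) (q α β lam : ℝ)
    (a b u v : EuclideanSpace ℝ (Fin N) → ℝ) : ℝ :=
  (1 / 2) * normH2 Ω u v - (lam / q) * aTerm Ω q a u v - (1 / (α + β)) * bTerm Ω α β b u v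

/-! On the Nehari manifold the `b`-term can be eliminated, which turns `J_λ` into
`c₁‖(u,v)‖² - c₂ λ∫a(|u|^q+|v|^q)` with `c₁, c₂ > 0`; the hypothesis on the `a`-term then bounds
`J_λ` below by `f(‖(u,v)‖)` with `f(t) = c₁t² - c₂Ct^q`. Since `q < 2`, `f` tends to `∞` and is
bounded below on `[0, ∞)`. -/

open Filter Set

theorem tendsto_mul_sq_sub_mul_rpow_atTop {c q : ℝ} (D : ℝ) (hc : 0 < c) (hq : q < 2) :
    Tendsto (fun t : ℝ => c * t ^ 2 - D * t ^ q) atTop atTop := by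
  have hfactor : ∀ᶠ t : ℝ in atTop, t ^ 2 * (c - D * t ^ (-(2 - q))) = c * t ^ 2 - D * t ^ q := by
    filter_upwards [eventually_gt_atTop 0] with t ht
    rw [mul_sub, mul_left_comm, ← rpow_natCast, ← rpow_add ht]
    norm_num
    ring
  have hlim : Tendsto (fun t : ℝ => c - D * t ^ (-(2 - q))) atTop (nhds c) := by
    simpa using ((tendsto_rpow_neg_atTop (sub_pos.2 hq)).const_mul D).const_sub c
  exact ((tendsto_pow_atTop two_ne_zero).atTop_mul_pos hc hlim).congr' hfactor

theorem bddBelow_mul_sq_sub_mul_rpow {c D q : ℝ} (hc : 0 < c) (hD : 0 ≤ D) (hq₀ : 0 ≤ q)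
    (hq : q < 2) : BddBelow ((fun t : ℝ => c * t ^ 2 - D * t ^ q) '' Ici 0) := by
  obtain ⟨R, hR⟩ := tendsto_atTop_atTop.1 (tendsto_mul_sq_sub_mul_rpow_atTop D hc hq) 0
  refine ⟨min 0 (-(D * R ^ q)), ?_⟩
  rintro _ ⟨t, ht, rfl⟩
  rcases le_or_gt R t with hRt | htR
  · exact (min_le_left _ _).trans (hR t hRt)
  · have hpow : D * t ^ q ≤ D * R ^ q :=
      mul_le_mul_of_nonneg_left (rpow_le_rpow ht htR.le hq₀) hD
    have hsq : 0 ≤ c * t ^ 2 := by positivity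
    exact (min_le_right _ _).trans (by linarith)

section Nehari

variable {N : ℕ} {Ω : Set (EuclideanSpace ℝ (Fin N))} {q α β lam : ℝ}
  {a b u v : EuclideanSpace ℝ (Fin N) → ℝ}

theorem normH2_nonneg : 0 ≤ normH2 Ω u v :=
  add_nonneg (integral_nonneg fun _ => rpow_nonneg (norm_nonneg _) _)
    (integral_nonneg fun _ => rpow_nonneg (norm_nonneg _) _)

theorem rpow_half_normH2_sq : (normH2 Ω u v ^ ((1 : ℝ) / 2)) ^ 2 = normH2 Ω u v := by
  rw [← sqrt_eq_rpow, sq_sqrt normH2_nonneg]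

theorem J2_eq_of_nehari (hq : q ≠ 0) (hαβ : α + β ≠ 0)
    (h : normH2 Ω u v = lam * aTerm Ω q a u v + bTerm Ω α β b u v) :
    J2 Ω q α β lam a b u v
      = ((α + β - 2) / (2 * (α + β))) * normH2 Ω u v
        - ((α + β - q) / (q * (α + β))) * (lam * aTerm Ω q a u v) := by
  rw [J2, show bTerm Ω α β b u v = normH2 Ω u v - lam * aTerm Ω q a u v by linarith]
  field_simp
  ring

theorem J2_ge_of_nehari {C : ℝ} (hq : 0 < q) (hqαβ : q < α + β)
    (hbound : lam * aTerm Ω q a u v ≤ C * (normH2 Ω u v ^ ((1 : ℝ) / 2)) ^ q)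
    (h : normH2 Ω u v = lam * aTerm Ω q a u v + bTerm Ω α β b u v) :
    J2 Ω q α β lam a b u v
      ≥ ((α + β - 2) / (2 * (α + β))) * normH2 Ω u v
        - ((α + β - q) / (q * (α + β))) * C * (normH2 Ω u v ^ ((1 : ℝ) / 2)) ^ q := by
  have hc : 0 ≤ (α + β - q) / (q * (α + β)) :=
    div_nonneg (by linarith) (mul_nonneg hq.le (by linarith))
  rw [J2_eq_of_nehari hq.ne' (by linarith) h, mul_assoc _ C]
  exact sub_le_sub_left (mul_le_mul_of_nonneg_left hbound hc) _

end Nehari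

theorem stmt_13_general {N : ℕ} (Ω : Set (EuclideanSpace ℝ (Fin N)))
    (q α β lam C : ℝ) (a b : EuclideanSpace ℝ (Fin N) → ℝ)
    (hq : 1 < q) (hq2 : q < 2) (hαβ : 2 < α + β) (hC : 0 ≤ C)
    (hbound : ∀ u v : EuclideanSpace ℝ (Fin N) → ℝ,
      lam * aTerm Ω q a u v ≤ C * (normH2 Ω u v ^ ((1 : ℝ) / 2)) ^ q) :
    (∀ u v : EuclideanSpace ℝ (Fin N) → ℝ,
        normH2 Ω u v = lam * aTerm Ω q a u v + bTerm Ω α β b u v →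
        J2 Ω q α β lam a b u v
          ≥ ((α + β - 2) / (2 * (α + β))) * normH2 Ω u v
            - ((α + β - q) / (q * (α + β))) * C * (normH2 Ω u v ^ ((1 : ℝ) / 2)) ^ q) ∧
    (∃ M : ℝ, ∀ u v : EuclideanSpace ℝ (Fin N) → ℝ,
        normH2 Ω u v = lam * aTerm Ω q a u v + bTerm Ω α β b u v →
        M ≤ J2 Ω q α β lam a b u v) ∧
    (∀ K : ℝ, ∃ R : ℝ, ∀ u v : EuclideanSpace ℝ (Fin N) → ℝ,
        normH2 Ω u v = lam * aTerm Ω q a u v + bTerm Ω α β b u v →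
        R ≤ normH2 Ω u v ^ ((1 : ℝ) / 2) →
        K ≤ J2 Ω q α β lam a b u v) := by
  have hq₀ : 0 < q := by linarith
  set c₁ := (α + β - 2) / (2 * (α + β))
  set D := (α + β - q) / (q * (α + β)) * C
  set f : ℝ → ℝ := fun t => c₁ * t ^ 2 - D * t ^ q
  have hc₁ : 0 < c₁ := div_pos (by linarith) (by linarith)
  have hD : 0 ≤ D := mul_nonneg (div_nonneg (by linarith) (mul_nonneg hq₀.le (by linarith))) hC
  have hJ : ∀ u v, normH2 Ω u v = lam * aTerm Ω q a u v + bTerm Ω α β b u v →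
      f (normH2 Ω u v ^ ((1 : ℝ) / 2)) ≤ J2 Ω q α β lam a b u v := fun u v h => by
    have hlower := J2_ge_of_nehari hq₀ (by linarith) (hbound u v) h
    simp only [f, rpow_half_normH2_sq]
    linarith
  refine ⟨fun u v => J2_ge_of_nehari hq₀ (by linarith) (hbound u v), ?_, fun K => ?_⟩
  · obtain ⟨M, hM⟩ := bddBelow_mul_sq_sub_mul_rpow hc₁ hD hq₀.le hq2
    exact ⟨M, fun u v h =>
      (hM (mem_image_of_mem f (mem_Ici.2 (rpow_nonneg normH2_nonneg _)))).trans (hJ u v h)⟩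
  · obtain ⟨R, hR⟩ := tendsto_atTop_atTop.1 (tendsto_mul_sq_sub_mul_rpow_atTop D hc₁ hq2) K
    exact ⟨R, fun u v h hRt => (hR _ hRt).trans (hJ u v h)⟩

/-- coercivity for the `p = 2` system.  If `1 < q < 2 < α+β` and
`λ(∫_Ω a|u|^q + ∫_Ω a|v|^q) ≤ C‖(u,v)‖_H^q` for all `(u,v)` (with `C ≥ 0`), then on the
Nehari manifold `J_λ(u,v) ≥ ((α+β-2)/(2(α+β)))‖(u,v)‖²_H - ((α+β-q)/(q(α+β)))C‖(u,v)‖_H^q`;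
in particular `J_λ` is bounded below and coercive on `M_λ(Ω)`. -/
theorem stmt_13 {N : ℕ} (Ω : Set (EuclideanSpace ℝ (Fin N)))
    (hΩ : Bornology.IsBounded Ω)
    (q α β lam C : ℝ) (a b : EuclideanSpace ℝ (Fin N) → ℝ)
    (ha : ContinuousOn a (closure Ω)) (hb : ContinuousOn b (closure Ω))
    (hq : 1 < q) (hq2 : q < 2) (hαβ : 2 < α + β) (hC : 0 ≤ C)
    (hbound : ∀ u v : EuclideanSpace ℝ (Fin N) → ℝ,
      lam * aTerm Ω q a u v ≤ C * (normH2 Ω u v ^ ((1 : ℝ) / 2)) ^ q) :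
    (∀ u v : EuclideanSpace ℝ (Fin N) → ℝ,
        normH2 Ω u v = lam * aTerm Ω q a u v + bTerm Ω α β b u v →
        J2 Ω q α β lam a b u v
          ≥ ((α + β - 2) / (2 * (α + β))) * normH2 Ω u v
            - ((α + β - q) / (q * (α + β))) * C * (normH2 Ω u v ^ ((1 : ℝ) / 2)) ^ q) ∧
    (∃ M : ℝ, ∀ u v : EuclideanSpace ℝ (Fin N) → ℝ,
        normH2 Ω u v = lam * aTerm Ω q a u v + bTerm Ω α β b u v →
        M ≤ J2 Ω q α β lam a b u v) ∧
    (∀ K : ℝ, ∃ R : ℝ, ∀ u v : EuclideanSpace ℝ (Fin N) → ℝ,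
        normH2 Ω u v = lam * aTerm Ω q a u v + bTerm Ω α β b u v →
        R ≤ normH2 Ω u v ^ ((1 : ℝ) / 2) →
        K ≤ J2 Ω q α β lam a b u v) :=
  stmt_13_general Ω q α β lam C a b hq hq2 hαβ hC hbound
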